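/- Let G be a graph with a fixed orientation of its edges, let f : V(G) → L be continuous, and let W be a closed walk in G that is (f,0)-almost contractible (i.e., I_W = Σ_{i=1}^n I_{T_i} for some f-contractible triangles T₁, …, T_n). Then ∫_W df = 0. -/

import Mathlib

/-- A graph together with a fixed orientation of its edges: each edge `e` has a
tail `e⁻` and a head `e⁺`. -/
structure OGraph : Type 1 where
  V : Type
  E : Type
  tail : E → V
  head : E → V

/-- The set of labels `L = {−1, 0, 1, ⋆}`. -/
inductive L : Type
  | neg | zero | pos | star
deriving DecidableEq

/-- The integer value of a label (with junk value `0` at `⋆`). -/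
def L.toInt : L → ℤ
  | .neg => -1
  | .zero => 0
  | .pos => 1
  | .star => 0

/-- Two vertices are adjacent if some edge has them as its two endpoints. -/
def OGraph.Adj (G : OGraph) (u v : G.V) : Prop :=
  ∃ e : G.E, (G.tail e = u ∧ G.head e = v) ∨ (G.tail e = v ∧ G.head e = u)

/-- `f` is continuous on `S`: no edge of `G` between vertices of `S` joins the
values `−1` and `1`. -/
def OContinuousOn (G : OGraph) (f : G.V → L) (S : Set G.V) : Prop :=
  ∀ u v : G.V, u ∈ S → v ∈ S → G.Adj u v → ¬(f u = L.neg ∧ f v = L.pos)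

/-- `f` is holomorphic on `S`: it is continuous on `S` and moreover no edge of `G`
between vertices of `S` joins the values `0` and `⋆`. -/
def OHolomorphicOn (G : OGraph) (f : G.V → L) (S : Set G.V) : Prop :=
  OContinuousOn G f S ∧
  ∀ u v : G.V, u ∈ S → v ∈ S → G.Adj u v → ¬(f u = L.zero ∧ f v = L.star)

/-- `f` is entire on `S`: it is continuous on `S` and takes no value `⋆` on `S`. -/
def OEntireOn (G : OGraph) (f : G.V → L) (S : Set G.V) : Prop :=
  OContinuousOn G f S ∧ ∀ v ∈ S, f v ≠ L.star

/-- The derivative `df : E(G) → ℤ`: `df(e) = f(e⁺) − f(e⁻)` if neither endpoint has value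
`⋆`, and `df(e) = 0` otherwise. -/
def dF (G : OGraph) (f : G.V → L) (e : G.E) : ℤ :=
  if f (G.tail e) = L.star ∨ f (G.head e) = L.star then 0
  else (f (G.head e)).toInt - (f (G.tail e)).toInt

/-- A walk `(v₀, e₁, v₁, …, e_n, v_n)` in `G`, not necessarily respecting the
orientation: each edge `e_i` joins `v_{i−1}` and `v_i` (in one of the two directions). -/
structure OWalk (G : OGraph) where
  n : ℕ
  v : Fin (n + 1) → G.V
  e : Fin n → G.E
  valid : ∀ i : Fin n,
    (G.tail (e i) = v i.castSucc ∧ G.head (e i) = v i.succ) ∨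
    (G.head (e i) = v i.castSucc ∧ G.tail (e i) = v i.succ)

open scoped Classical in
/-- `I_W = Σ_i ε_i`, where `ε_i(e_i) = +1` if `v_i = e_i⁺`, `ε_i(e_i) = −1` if
`v_i = e_i⁻`, and `ε_i(e) = 0` for `e ≠ e_i`. -/
noncomputable def OWalk.I {G : OGraph} (W : OWalk G) (e' : G.E) : ℤ :=
  ∑ i : Fin W.n,
    if W.e i = e' then (if G.head (W.e i) = W.v i.succ then 1 else -1) else 0

/-- `∫_W h = Σ_{e ∈ E(G)} I_W(e) · h(e)`. -/
noncomputable def intW {G : OGraph} [Fintype G.E] (W : OWalk G) (h : G.E → ℤ) : ℤ :=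
  ∑ e : G.E, W.I e * h e

/-!
Since `I_W = Σ I_{T_i}`, the integral `∫_W df` splits as `Σ ∫_{T_i} df`, so it suffices that `df`
integrates to zero around every `f`-contractible triangle. If no vertex of the triangle carries
`⋆`, then `df` is the coboundary of `f` on its edges and telescopes to zero around the closed walk.
If some vertex carries `⋆`, then every vertex is equal or adjacent to it, so holomorphy rules out
the value `0` on the triangle; continuity then forces `df = 0` on each of its edges.
-/

theorem Fin.sum_univ_succ_sub_castSucc {M : Type*} [AddCommGroup M] {n : ℕ}
    (u : Fin (n + 1) → M) :
    ∑ i : Fin n, (u i.succ - u i.castSucc) = u (Fin.last n) - u 0 := by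
  induction n with
  | zero => simp
  | succ n ih =>
    rw [Fin.sum_univ_castSucc]
    simp only [Fin.succ_castSucc]
    rw [ih (fun j => u j.castSucc), Fin.succ_last, Fin.castSucc_zero]
    abel

theorem OGraph.Adj.symm {G : OGraph} {u v : G.V} (h : G.Adj u v) : G.Adj v u :=
  let ⟨e, he⟩ := h; ⟨e, he.symm⟩

namespace OWalk

variable {G : OGraph}

theorem adj_castSucc_succ (W : OWalk G) (i : Fin W.n) :
    G.Adj (W.v i.castSucc) (W.v i.succ) :=
  ⟨W.e i, (W.valid i).imp id And.symm⟩

theorem tail_mem_range (W : OWalk G) (i : Fin W.n) : G.tail (W.e i) ∈ Set.range W.v := by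
  rcases W.valid i with ⟨h, -⟩ | ⟨-, h⟩ <;> exact ⟨_, h.symm⟩

theorem head_mem_range (W : OWalk G) (i : Fin W.n) : G.head (W.e i) ∈ Set.range W.v := by
  rcases W.valid i with ⟨-, h⟩ | ⟨h, -⟩ <;> exact ⟨_, h.symm⟩

theorem eq_or_adj_of_triangle (T : OWalk G) (h3 : T.n = 3)
    (hc : T.v (Fin.last T.n) = T.v 0) {x y : G.V} (hx : x ∈ Set.range T.v)
    (hy : y ∈ Set.range T.v) : x = y ∨ G.Adj x y := by
  obtain ⟨n, v, e, valid⟩ := T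
  subst h3
  obtain ⟨a, rfl⟩ := hx
  obtain ⟨b, rfl⟩ := hy
  have hc : v 3 = v 0 := hc
  have A01 : G.Adj (v 0) (v 1) := adj_castSucc_succ ⟨3, v, e, valid⟩ 0
  have A12 : G.Adj (v 1) (v 2) := adj_castSucc_succ ⟨3, v, e, valid⟩ 1
  have A20 : G.Adj (v 2) (v 0) := hc ▸ adj_castSucc_succ ⟨3, v, e, valid⟩ 2
  fin_cases a <;> fin_cases b <;> simp [hc, A01, A12, A20, A01.symm, A12.symm, A20.symm]

open scoped Classical in
noncomputable def sign (W : OWalk G) (i : Fin W.n) : ℤ :=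
  if G.head (W.e i) = W.v i.succ then 1 else -1

theorem intW_eq_sum_sign_mul [Fintype G.E] (W : OWalk G) (h : G.E → ℤ) :
    intW W h = ∑ i : Fin W.n, W.sign i * h (W.e i) := by
  classical
  simp only [intW, OWalk.I, sign, Finset.sum_mul, ite_mul, zero_mul]
  rw [Finset.sum_comm]
  refine Finset.sum_congr rfl fun i _ => ?_
  simp [Finset.sum_ite_eq]

theorem sign_mul_eq_sub (W : OWalk G) (h : G.E → ℤ) (g : G.V → ℤ) (i : Fin W.n)
    (hg : h (W.e i) = g (G.head (W.e i)) - g (G.tail (W.e i))) :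
    W.sign i * h (W.e i) = g (W.v i.succ) - g (W.v i.castSucc) := by
  unfold sign
  rcases W.valid i with ⟨ht, hh⟩ | ⟨hh, ht⟩
  · rw [if_pos hh, hg, hh, ht, one_mul]
  · rw [hg, hh, ht]
    split_ifs with hloop
    · rw [hloop, one_mul]
    · ring

theorem intW_eq_zero_of_exact [Fintype G.E] (W : OWalk G) (hc : W.v (Fin.last W.n) = W.v 0)
    (h : G.E → ℤ) (g : G.V → ℤ)
    (hg : ∀ i, h (W.e i) = g (G.head (W.e i)) - g (G.tail (W.e i))) :
    intW W h = 0 := by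
  rw [intW_eq_sum_sign_mul, Finset.sum_congr rfl fun i _ => W.sign_mul_eq_sub h g i (hg i),
    Fin.sum_univ_succ_sub_castSucc fun j => g (W.v j), hc, sub_self]

theorem intW_eq_sum_of_I_eq_sum [Fintype G.E] {ι : Type*} [Fintype ι] (W : OWalk G)
    (T : ι → OWalk G) (hI : ∀ e, W.I e = ∑ i, (T i).I e) (h : G.E → ℤ) :
    intW W h = ∑ i, intW (T i) h := by
  simp only [intW, hI, Finset.sum_mul]
  exact Finset.sum_comm

end OWalk

section dF

variable {G : OGraph} {f : G.V → L}

theorem dF_eq_sub_of_ne_star {e : G.E} (ht : f (G.tail e) ≠ .star) (hh : f (G.head e) ≠ .star) :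
    dF G f e = (f (G.head e)).toInt - (f (G.tail e)).toInt := by
  simp [dF, ht, hh]

theorem dF_eq_zero_of_continuousOn {S : Set G.V} (hf : OContinuousOn G f S) {e : G.E}
    (ht : G.tail e ∈ S) (hh : G.head e ∈ S)
    (ht0 : f (G.tail e) ≠ .zero) (hh0 : f (G.head e) ≠ .zero) : dF G f e = 0 := by
  have hnp := hf _ _ ht hh ⟨e, .inl ⟨rfl, rfl⟩⟩
  have hpn := hf _ _ hh ht ⟨e, .inr ⟨rfl, rfl⟩⟩
  unfold dF
  generalize f (G.tail e) = a at *
  generalize f (G.head e) = b at *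
  cases a <;> cases b <;> simp_all [L.toInt]

theorem intW_dF_eq_zero_of_holomorphicOn [Fintype G.E] (W : OWalk G)
    (hc : W.v (Fin.last W.n) = W.v 0)
    (hclique : ∀ x ∈ Set.range W.v, ∀ y ∈ Set.range W.v, x = y ∨ G.Adj x y)
    (hf : OHolomorphicOn G f (Set.range W.v)) : intW W (dF G f) = 0 := by
  by_cases hstar : ∃ x ∈ Set.range W.v, f x = .star
  · obtain ⟨x, hx, hxs⟩ := hstar
    have hne0 : ∀ y ∈ Set.range W.v, f y ≠ .zero := by
      intro y hy hy0
      rcases hclique y hy x hx with rfl | hadj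
      · exact L.noConfusion (hy0.symm.trans hxs)
      · exact hf.2 y x hy hx hadj ⟨hy0, hxs⟩
    refine W.intW_eq_zero_of_exact hc _ 0 fun i => ?_
    rw [dF_eq_zero_of_continuousOn hf.1 (W.tail_mem_range i) (W.head_mem_range i)
      (hne0 _ (W.tail_mem_range i)) (hne0 _ (W.head_mem_range i))]
    exact (sub_self 0).symm
  · push Not at hstar
    exact W.intW_eq_zero_of_exact hc _ (fun x => (f x).toInt) fun i =>
      dF_eq_sub_of_ne_star (hstar _ (W.tail_mem_range i)) (hstar _ (W.head_mem_range i))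

end dF

theorem stmt_6_general (G : OGraph) [Fintype G.E] (f : G.V → L)
    (W : OWalk G)
    (m : ℕ) (T : Fin m → OWalk G)
    (hT3 : ∀ i, (T i).n = 3)
    (hTclosed : ∀ i, (T i).v (Fin.last (T i).n) = (T i).v 0)
    (hTcontr : ∀ i, OHolomorphicOn G f (Set.range (T i).v))
    (hI : ∀ e : G.E, W.I e = ∑ i : Fin m, (T i).I e) :
    intW W (dF G f) = 0 := by
  rw [W.intW_eq_sum_of_I_eq_sum T hI]
  exact Finset.sum_eq_zero fun i _ => intW_dF_eq_zero_of_holomorphicOn (T i) (hTclosed i)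
    (fun x hx y hy => (T i).eq_or_adj_of_triangle (hT3 i) (hTclosed i) hx hy) (hTcontr i)

/-- If `f` is continuous and `W` is a closed walk that is `(f,0)`-almost contractible,
i.e. `I_W = Σ_{i=1}^m I_{T_i}` for some `f`-contractible triangles `T₁, …, T_m`, then
`∫_W df = 0`. -/
theorem stmt_6 (G : OGraph) [Fintype G.E] (f : G.V → L)
    (hcont : OContinuousOn G f Set.univ)
    (W : OWalk G) (hWclosed : W.v (Fin.last W.n) = W.v 0)
    (m : ℕ) (T : Fin m → OWalk G)
    (hT3 : ∀ i, (T i).n = 3)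
    (hTclosed : ∀ i, (T i).v (Fin.last (T i).n) = (T i).v 0)
    (hTcontr : ∀ i, OHolomorphicOn G f (Set.range (T i).v))
    (hI : ∀ e : G.E, W.I e = ∑ i : Fin m, (T i).I e) :
    intW W (dF G f) = 0 :=
  stmt_6_general G f W m T hT3 hTclosed hTcontr hI
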